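/- Let n ≥ 2. For every g in the subgroup H_n of G_BV there exists h in H_{n+1} such that in G_BV either g = h, or g = h · x_i^{−1} for some 0 ≤ i ≤ n − 2. Similarly, for every g in H_n there exists h' in H_{n+1} such that either g = h', or g = x_i · h' for some 0 ≤ i ≤ n − 2. -/

import Mathlib

/-- Relator corresponding to the equation `u = v`. -/
def grel {α : Type*} (u v : FreeGroup α) : FreeGroup α := u * v⁻¹

/-- Generators of the braided Thompson group `BV`.  `s i` denotes `σ_{i+1}` and
`t i` denotes `τ_{i+1}` (so that exactly the generators `σ_i, τ_i` with `i ≥ 1` occur). -/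
inductive BVGen : Type
  | x : ℕ → BVGen
  | s : ℕ → BVGen
  | t : ℕ → BVGen

namespace BVGen

/-- The free-group letter `x_i`. -/
def X (i : ℕ) : FreeGroup BVGen := FreeGroup.of (BVGen.x i)

/-- The free-group letter `σ_i` (meaningful for `i ≥ 1`). -/
def S (i : ℕ) : FreeGroup BVGen := FreeGroup.of (BVGen.s (i - 1))

/-- The free-group letter `τ_i` (meaningful for `i ≥ 1`). -/
def T (i : ℕ) : FreeGroup BVGen := FreeGroup.of (BVGen.t (i - 1))

/-- The defining relations of the braided Thompson group `BV`. -/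
def bvRels : Set (FreeGroup BVGen) :=
  { g |
    (∃ i j, i < j ∧ g = grel (X j * X i) (X i * X (j + 1))) ∨
    (∃ i j, 1 ≤ i ∧ i + 2 ≤ j ∧ g = grel (S i * S j) (S j * S i)) ∨
    (∃ i, 1 ≤ i ∧ g = grel (S i * S (i + 1) * S i) (S (i + 1) * S i * S (i + 1))) ∨
    (∃ i j, 1 ≤ i ∧ i + 2 ≤ j ∧ g = grel (S i * T j) (T j * S i)) ∨
    (∃ i, 1 ≤ i ∧ g = grel (S i * T (i + 1) * S i) (T (i + 1) * S i * T (i + 1))) ∨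
    (∃ i j, 1 ≤ i ∧ i < j ∧ g = grel (S i * X j) (X j * S i)) ∨
    (∃ i, 1 ≤ i ∧ g = grel (S i * X i) (X (i - 1) * S (i + 1) * S i)) ∨
    (∃ i j, j + 2 ≤ i ∧ g = grel (S i * X j) (X j * S (i + 1))) ∨
    (∃ i, g = grel (S (i + 1) * X i) (X (i + 1) * S (i + 1) * S (i + 2))) ∨
    (∃ i j, j + 2 ≤ i ∧ g = grel (T i * X j) (X j * T (i + 1))) ∨
    (∃ i, 1 ≤ i ∧ g = grel (T i * X (i - 1)) (S i * T (i + 1))) ∨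
    (∃ i, 1 ≤ i ∧ g = grel (T i) (X (i - 1) * T (i + 1) * S i)) }

end BVGen

/-- The braided Thompson group `BV`, given by its infinite presentation. -/
abbrev GBV : Type := PresentedGroup BVGen.bvRels

namespace GBV

/-- The generator `x_i` of `BV`. -/
def xg (i : ℕ) : GBV := PresentedGroup.of (BVGen.x i)

/-- The generator `σ_i` of `BV` (meaningful for `i ≥ 1`). -/
def sg (i : ℕ) : GBV := PresentedGroup.of (BVGen.s (i - 1))

/-- The generator `τ_i` of `BV` (meaningful for `i ≥ 1`). -/
def tg (i : ℕ) : GBV := PresentedGroup.of (BVGen.t (i - 1))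

/-- H_n: the subgroup of `BV` generated by the B_n generators
`σ_1, …, σ_{n-2}, τ_{n-1}`. -/
def Hn (n : ℕ) : Subgroup GBV :=
  Subgroup.closure ({g | ∃ i, 1 ≤ i ∧ i + 2 ≤ n ∧ g = sg i} ∪ {tg (n - 1)})

end GBV

/-!
Put `n = m + 2` and `C = {1, x₀⁻¹, …, x_m⁻¹}`. Both statements follow from `H_{m+2} ⊆ H_{m+3} · C`,
the second one applied to `g⁻¹`. Since `H_{m+3}` is a subgroup, `H_{m+3} · C` contains the
subgroup generated by a set `S` as soon as it contains `1` and all `c · s^{±1}` with `c ∈ C`,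
`s ∈ S`. For the generators `σ_k`, `τ_{m+1}` of `H_{m+2}` this is read off (C1)–(C4) and
(D1)–(D3): each moves an `x_i` past `σ_k` or `τ_{m+1}` at the cost of raising indices by at most
one, which lands in `H_{m+3}`.
-/

open scoped Pointwise

namespace Subgroup

theorem closure_subset_mul_of_mul_mem {G : Type*} [Group G] {K : Subgroup G} {S C : Set G}
    (hC : (1 : G) ∈ C) (hS : ∀ c ∈ C, ∀ s ∈ S, c * s ∈ (K : Set G) * C)
    (hS' : ∀ c ∈ C, ∀ s ∈ S, c * s⁻¹ ∈ (K : Set G) * C) :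
    (closure S : Set G) ⊆ (K : Set G) * C := by
  have mul_mem_of_forall {g y : G} (hg : g ∈ (K : Set G) * C)
      (hy : ∀ c ∈ C, c * y ∈ (K : Set G) * C) : g * y ∈ (K : Set G) * C := by
    obtain ⟨k, hk, c, hc, rfl⟩ := Set.mem_mul.mp hg
    obtain ⟨k', hk', c', hc', hcy⟩ := Set.mem_mul.mp (hy c hc)
    rw [mul_assoc, ← hcy, ← mul_assoc]
    exact Set.mul_mem_mul (K.mul_mem hk hk') hc'
  intro g hg
  induction hg using closure_induction_right with
  | one => exact one_mul (1 : G) ▸ Set.mul_mem_mul K.one_mem hC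
  | mul_right x _ s hs ih => exact mul_mem_of_forall ih fun c hc => hS c hc s hs
  | mul_inv_cancel x _ s hs ih => exact mul_mem_of_forall ih fun c hc => hS' c hc s hs

end Subgroup

namespace GBV

theorem sg_mul_xg_of_lt {i j : ℕ} (hi : 1 ≤ i) (hij : i < j) : sg i * xg j = xg j * sg i :=
  PresentedGroup.mk_eq_mk_of_mul_inv_mem <| by
    iterate 5 right
    exact .inl ⟨i, j, hi, hij, rfl⟩

theorem sg_succ_mul_xg_succ (i : ℕ) :
    sg (i + 1) * xg (i + 1) = xg i * sg (i + 2) * sg (i + 1) :=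
  PresentedGroup.mk_eq_mk_of_mul_inv_mem <| by
    iterate 6 right
    exact .inl ⟨i + 1, i.succ_pos, rfl⟩

theorem sg_mul_xg_of_add_two_le {i j : ℕ} (h : j + 2 ≤ i) : sg i * xg j = xg j * sg (i + 1) :=
  PresentedGroup.mk_eq_mk_of_mul_inv_mem <| by
    iterate 7 right
    exact .inl ⟨i, j, h, rfl⟩

theorem sg_succ_mul_xg (i : ℕ) : sg (i + 1) * xg i = xg (i + 1) * sg (i + 1) * sg (i + 2) :=
  PresentedGroup.mk_eq_mk_of_mul_inv_mem <| by
    iterate 8 right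
    exact .inl ⟨i, rfl⟩

theorem tg_mul_xg_of_add_two_le {i j : ℕ} (h : j + 2 ≤ i) : tg i * xg j = xg j * tg (i + 1) :=
  PresentedGroup.mk_eq_mk_of_mul_inv_mem <| by
    iterate 9 right
    exact .inl ⟨i, j, h, rfl⟩

theorem tg_succ_mul_xg (i : ℕ) : tg (i + 1) * xg i = sg (i + 1) * tg (i + 2) :=
  PresentedGroup.mk_eq_mk_of_mul_inv_mem <| by
    iterate 10 right
    exact .inl ⟨i + 1, i.succ_pos, rfl⟩

theorem tg_succ_eq (i : ℕ) : tg (i + 1) = xg i * tg (i + 2) * sg (i + 1) :=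
  PresentedGroup.mk_eq_mk_of_mul_inv_mem <| by
    iterate 11 right
    exact ⟨i + 1, i.succ_pos, rfl⟩

theorem sg_mem_Hn {k n : ℕ} (hk : 1 ≤ k) (hkn : k + 2 ≤ n) : sg k ∈ Hn n :=
  Subgroup.subset_closure (.inl ⟨k, hk, hkn, rfl⟩)

theorem tg_mem_Hn (n : ℕ) : tg n ∈ Hn (n + 1) :=
  Subgroup.subset_closure (.inr rfl)

def xInvUpTo (m : ℕ) : Set GBV := insert 1 ((fun i => (xg i)⁻¹) '' Set.Iic m)

section Covering

variable {m n : ℕ}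

theorem mem_Hn_mul_xInvUpTo {b : GBV} (hb : b ∈ Hn n) :
    b ∈ (Hn n : Set GBV) * xInvUpTo m :=
  mul_one b ▸ Set.mul_mem_mul hb (Set.mem_insert 1 _)

theorem mul_inv_xg_mem_Hn_mul_xInvUpTo {b : GBV} {j : ℕ} (hb : b ∈ Hn n) (hj : j ≤ m) :
    b * (xg j)⁻¹ ∈ (Hn n : Set GBV) * xInvUpTo m :=
  Set.mul_mem_mul hb (Set.mem_insert_of_mem 1 ⟨j, hj, rfl⟩)

theorem inv_xg_mul_mem_of_mul_xg_eq {a b : GBV} {i j : ℕ} (hj : j ≤ m) (hb : b ∈ Hn n)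
    (h : a * xg j = xg i * b) : (xg i)⁻¹ * a ∈ (Hn n : Set GBV) * xInvUpTo m := by
  have : (xg i)⁻¹ * a = b * (xg j)⁻¹ := by rw [eq_mul_inv_of_mul_eq h]; group
  exact this ▸ mul_inv_xg_mem_Hn_mul_xInvUpTo hb hj

theorem inv_xg_mul_inv_mem_of_mul_xg_eq {a b : GBV} {i j : ℕ} (hi : i ≤ m) (hb : b ∈ Hn n)
    (h : a * xg j = xg i * b) : (xg j)⁻¹ * a⁻¹ ∈ (Hn n : Set GBV) * xInvUpTo m := by
  have : (xg j)⁻¹ * a⁻¹ = b⁻¹ * (xg i)⁻¹ := by rw [eq_mul_inv_of_mul_eq h]; group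
  exact this ▸ mul_inv_xg_mem_Hn_mul_xInvUpTo (inv_mem hb) hi

theorem mul_sg_mem {c : GBV} {k : ℕ} (hc : c ∈ xInvUpTo m) (hk : 1 ≤ k) (hkm : k ≤ m) :
    c * sg k ∈ (Hn (m + 3) : Set GBV) * xInvUpTo m := by
  obtain rfl | ⟨i, hi, rfl⟩ := hc
  · exact (one_mul (sg k)).symm ▸ mem_Hn_mul_xInvUpTo (sg_mem_Hn hk (by omega))
  obtain hki | rfl | hik := lt_trichotomy k i
  · exact inv_xg_mul_mem_of_mul_xg_eq hi (sg_mem_Hn hk (by omega)) (sg_mul_xg_of_lt hk hki)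
  · obtain ⟨i, rfl⟩ : ∃ i', k = i' + 1 := ⟨k - 1, by omega⟩
    exact inv_xg_mul_mem_of_mul_xg_eq (by omega)
      (mul_mem (sg_mem_Hn (by omega) (by omega)) (sg_mem_Hn (by omega) (by omega)))
      ((sg_succ_mul_xg i).trans (mul_assoc _ _ _))
  obtain rfl | hik := (show i + 1 ≤ k by omega).eq_or_lt
  · exact inv_xg_mul_mem_of_mul_xg_eq hkm
      (mul_mem (sg_mem_Hn (by omega) (by omega)) (sg_mem_Hn (by omega) (by omega)))
      ((sg_succ_mul_xg_succ i).trans (mul_assoc _ _ _))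
  · exact inv_xg_mul_mem_of_mul_xg_eq hi (sg_mem_Hn (by omega) (by omega))
      (sg_mul_xg_of_add_two_le hik)

theorem mul_sg_inv_mem {c : GBV} {k : ℕ} (hc : c ∈ xInvUpTo m) (hk : 1 ≤ k) (hkm : k ≤ m) :
    c * (sg k)⁻¹ ∈ (Hn (m + 3) : Set GBV) * xInvUpTo m := by
  obtain rfl | ⟨i, hi, rfl⟩ := hc
  · exact (one_mul (sg k)⁻¹).symm ▸ mem_Hn_mul_xInvUpTo (inv_mem (sg_mem_Hn hk (by omega)))
  obtain hki | rfl | hik := lt_trichotomy k i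
  · exact inv_xg_mul_inv_mem_of_mul_xg_eq hi (sg_mem_Hn hk (by omega)) (sg_mul_xg_of_lt hk hki)
  · obtain ⟨i, rfl⟩ : ∃ i', k = i' + 1 := ⟨k - 1, by omega⟩
    exact inv_xg_mul_inv_mem_of_mul_xg_eq (by omega)
      (mul_mem (sg_mem_Hn (by omega) (by omega)) (sg_mem_Hn (by omega) (by omega)))
      ((sg_succ_mul_xg_succ i).trans (mul_assoc _ _ _))
  obtain rfl | hik := (show i + 1 ≤ k by omega).eq_or_lt
  · exact inv_xg_mul_inv_mem_of_mul_xg_eq hkm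
      (mul_mem (sg_mem_Hn (by omega) (by omega)) (sg_mem_Hn (by omega) (by omega)))
      ((sg_succ_mul_xg i).trans (mul_assoc _ _ _))
  · exact inv_xg_mul_inv_mem_of_mul_xg_eq hi (sg_mem_Hn (by omega) (by omega))
      (sg_mul_xg_of_add_two_le hik)

theorem mul_tg_mem {c : GBV} (hc : c ∈ xInvUpTo m) :
    c * tg (m + 1) ∈ (Hn (m + 3) : Set GBV) * xInvUpTo m := by
  have hs : sg (m + 1) ∈ Hn (m + 3) := sg_mem_Hn (by omega) (by omega)
  have ht : tg (m + 2) ∈ Hn (m + 3) := tg_mem_Hn (m + 2)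
  obtain rfl | ⟨i, hi, rfl⟩ := hc
  · rw [one_mul, eq_mul_inv_of_mul_eq (tg_succ_mul_xg m)]
    exact mul_inv_xg_mem_Hn_mul_xInvUpTo (mul_mem hs ht) le_rfl
  obtain hi | hi := (Set.mem_Iic.mp hi).lt_or_eq
  · exact inv_xg_mul_mem_of_mul_xg_eq hi.le ht (tg_mul_xg_of_add_two_le (by omega))
  · subst i
    rw [tg_succ_eq m, mul_assoc, inv_mul_cancel_left]
    exact mem_Hn_mul_xInvUpTo (mul_mem ht hs)

theorem mul_tg_inv_mem {c : GBV} (hc : c ∈ xInvUpTo m) :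
    c * (tg (m + 1))⁻¹ ∈ (Hn (m + 3) : Set GBV) * xInvUpTo m := by
  have hs : sg (m + 1) ∈ Hn (m + 3) := sg_mem_Hn (by omega) (by omega)
  have ht : tg (m + 2) ∈ Hn (m + 3) := tg_mem_Hn (m + 2)
  obtain rfl | ⟨i, hi, rfl⟩ := hc
  · rw [one_mul, tg_succ_eq m, mul_assoc, mul_inv_rev]
    exact mul_inv_xg_mem_Hn_mul_xInvUpTo (inv_mem (mul_mem ht hs)) le_rfl
  obtain hi | hi := (Set.mem_Iic.mp hi).lt_or_eq
  · exact inv_xg_mul_inv_mem_of_mul_xg_eq hi.le ht (tg_mul_xg_of_add_two_le (by omega))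
  · subst i
    rw [← mul_inv_rev, tg_succ_mul_xg]
    exact mem_Hn_mul_xInvUpTo (inv_mem (mul_mem hs ht))

end Covering

theorem coe_Hn_subset_mul_xInvUpTo (m : ℕ) :
    (Hn (m + 2) : Set GBV) ⊆ (Hn (m + 3) : Set GBV) * xInvUpTo m := by
  refine Subgroup.closure_subset_mul_of_mul_mem (Set.mem_insert 1 _) ?_ ?_ <;>
    rintro c hc s (⟨k, hk, hkm, rfl⟩ | rfl)
  exacts [mul_sg_mem hc hk (by omega), mul_tg_mem hc, mul_sg_inv_mem hc hk (by omega),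
    mul_tg_inv_mem hc]

end GBV

/-- Lemma (pumping): for `n ≥ 2`, every `g ∈ H_n` equals `h` or `h * x_i⁻¹`
with `h ∈ H_{n+1}` and `i ≤ n-2`; similarly `g = h'` or `g = x_i * h'`. -/
theorem bv_pumping (n : ℕ) (hn : 2 ≤ n) :
    (∀ g ∈ GBV.Hn n, ∃ h ∈ GBV.Hn (n + 1),
      g = h ∨ ∃ i, i ≤ n - 2 ∧ g = h * (GBV.xg i)⁻¹) ∧
    (∀ g ∈ GBV.Hn n, ∃ h' ∈ GBV.Hn (n + 1),
      g = h' ∨ ∃ i, i ≤ n - 2 ∧ g = GBV.xg i * h') := by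
  obtain ⟨m, rfl⟩ : ∃ m, n = m + 2 := ⟨n - 2, by omega⟩
  have cover := GBV.coe_Hn_subset_mul_xInvUpTo m
  constructor
  · intro g hg
    obtain ⟨h, hh, c, hc, rfl⟩ := Set.mem_mul.mp (cover hg)
    refine ⟨h, hh, ?_⟩
    obtain rfl | ⟨i, hi, rfl⟩ := hc
    · exact .inl (mul_one h)
    · exact .inr ⟨i, hi, rfl⟩
  · intro g hg
    obtain ⟨h, hh, c, hc, hg'⟩ := Set.mem_mul.mp (cover (inv_mem hg))
    rw [← inv_inv g, ← hg', mul_inv_rev]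
    refine ⟨h⁻¹, inv_mem hh, ?_⟩
    obtain rfl | ⟨i, hi, rfl⟩ := hc
    · exact .inl (one_mul _)
    · exact .inr ⟨i, hi, by rw [inv_inv]⟩
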